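/- arXiv:2209.03498 — 3 statements merged into one kernel-verified Lean document; each statement's English description precedes it below -/
import Mathlib

section
/- Let A → R be an integral extension of noetherian rings and M a finitely generated A-module. Then codim_R(R ⊗_A M) ≤ codim_A M. -/
/-!
Let `p ⊇ Ann_A M` be a prime of `A`. By lying over, `p = Q ∩ A` for a prime `Q` of `R`, and
`Q` lies in the support of `R ⊗[A] M`, because `κ(Q) ⊗[R] (R ⊗[A] M) = κ(Q) ⊗[κ(p)] (κ(p) ⊗[A] M)`
is nonzero: `κ(p) ⊗[A] M ≠ 0` by Nakayama, and extending scalars of a nonzero vector space to a larger field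
keeps it nonzero. Hence `Q ⊇ Ann_R (R ⊗[A] M)`, and `ht Q ≤ ht p` since contraction is
strictly monotone on primes of an integral extension.
-/

open TensorProduct

/-- The height of an ideal: the infimum of the heights of the primes containing it
(`⊤` if no prime contains it, e.g. for the unit ideal). -/
noncomputable def idealHeight {R : Type*} [CommRing R] (I : Ideal R) : ℕ∞ :=
  ⨅ (p : PrimeSpectrum R) (_ : I ≤ p.asIdeal), Order.height p

/-- The codimension of a module: the height of its annihilator ideal. -/
noncomputable def moduleCodim (R : Type*) [CommRing R] (M : Type*) [AddCommGroup M]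
    [Module R M] : ℕ∞ :=
  idealHeight (Module.annihilator R M)

namespace Module

theorem nontrivial_tensorProduct_of_annihilator_le_ker {A M K : Type*} [CommRing A]
    [AddCommGroup M] [Module A M] [Module.Finite A M] [Field K] [Algebra A K]
    (h : annihilator A M ≤ RingHom.ker (algebraMap A K)) : Nontrivial (K ⊗[A] M) := by
  set p := RingHom.ker (algebraMap A K)
  have : p.IsPrime := RingHom.ker_isPrime _
  have hp : (⟨p, inferInstance⟩ : PrimeSpectrum A) ∈ support A M :=
    mem_support_iff_of_finite.mpr h
  rw [mem_support_iff_nontrivial_residueField_tensorProduct] at hp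
  let : Algebra p.ResidueField K := (Ideal.ResidueField.lift p (algebraMap A K) le_rfl
    fun _ hx ↦ (isUnit_iff_ne_zero.mpr hx :)).toAlgebra
  have : IsScalarTower A p.ResidueField K :=
    .of_algebraMap_eq fun a ↦ (Ideal.ResidueField.lift_algebraMap _ _ _ _ a).symm
  exact (AlgebraTensorModule.cancelBaseChange A p.ResidueField K K M).symm.nontrivial

theorem mem_support_baseChange_of_comap_mem_support {A R M : Type*} [CommRing A]
    [CommRing R] [Algebra A R] [AddCommGroup M] [Module A M] [Module.Finite A M]
    {Q : PrimeSpectrum R} (h : Q.comap (algebraMap A R) ∈ support A M) :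
    Q ∈ support R (R ⊗[A] M) := by
  rw [mem_support_iff_nontrivial_residueField_tensorProduct,
    (AlgebraTensorModule.cancelBaseChange A R Q.asIdeal.ResidueField _ M).nontrivial_congr]
  apply nontrivial_tensorProduct_of_annihilator_le_ker
  rw [IsScalarTower.algebraMap_eq A R, ← RingHom.comap_ker, Ideal.ker_algebraMap_residueField]
  exact mem_support_iff_of_finite.mp h

end Module

theorem PrimeSpectrum.comap_strictMono_of_isIntegral (A R : Type*) [CommRing A] [CommRing R]
    [Algebra A R] [Algebra.IsIntegral A R] : StrictMono (comap (algebraMap A R)) :=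
  fun _ _ h ↦ Ideal.IsIntegral.comap_lt_comap (R := A) h

theorem codim_base_change_le_general
    (A R : Type*) [CommRing A] [CommRing R]
    [Algebra A R] (hinj : Function.Injective (algebraMap A R))
    [Algebra.IsIntegral A R]
    (M : Type*) [AddCommGroup M] [Module A M] [Module.Finite A M] :
    moduleCodim R (R ⊗[A] M) ≤ moduleCodim A M := by
  have : FaithfulSMul A R := (faithfulSMul_iff_algebraMap_injective A R).mpr hinj
  refine le_iInf₂ fun p hp ↦ ?_
  obtain ⟨Q, rfl⟩ := Algebra.IsIntegral.comap_surjective A R p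
  have hQ : Q ∈ Module.support R (R ⊗[A] M) :=
    Module.mem_support_baseChange_of_comap_mem_support (Module.mem_support_iff_of_finite.mpr hp)
  exact iInf₂_le_of_le Q (Module.annihilator_le_of_mem_support hQ) <|
    Order.height_le_height_apply_of_strictMono _
      (PrimeSpectrum.comap_strictMono_of_isIntegral A R) Q

theorem codim_base_change_le
    (A R : Type*) [CommRing A] [CommRing R] [IsNoetherianRing A] [IsNoetherianRing R]
    [Algebra A R] (hinj : Function.Injective (algebraMap A R))
    [Algebra.IsIntegral A R]
    (M : Type*) [AddCommGroup M] [Module A M] [Module.Finite A M] :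
    moduleCodim R (R ⊗[A] M) ≤ moduleCodim A M :=
  codim_base_change_le_general A R hinj M
end

section
/- Let k be a field, R = k[x,y,z]/((x,y) ∩ (z)), and A = k[x+z, y] the subring of R generated by the images of x+z and y. For M = A/yA one has codim_A M = 1 but codim_R(R ⊗_A M) = 0. In particular, codimension can strictly drop under base change along an integral extension. -/
/-!
`R` is the coordinate ring of the union of the plane `z = 0` and the `z`-axis `x = y = 0`.
Since `xz = 0` and `x + z = u`, both `x` and `z` are roots of `T(T - u)`, so `R` is integral over
`A = k[u, v]`; killing `z` retracts `k[u, v] → k[x, y, z]`, so `A → R` is injective.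
By Krull's principal ideal theorem `(v)` has height one in the domain `A`, whereas
`R ⊗_A A/(v) ≅ R/(y)` and `y` lies in `(x, y)`, the minimal prime of the `z`-axis component.
-/

open TensorProduct MvPolynomial

lemma idealHeight_eq_height {R : Type*} [CommRing R] (I : Ideal R) :
    idealHeight I = I.height := by
  apply le_antisymm
  · rw [Ideal.height_eq_inf_minimalPrimes]
    refine le_iInf₂ fun J hJ => ?_
    have := hJ.isPrime
    exact (iInf₂_le ⟨J, this⟩ hJ.le).trans_eq
      (PrimeSpectrum.height_eq_orderHeight ⟨J, this⟩).symm
  · refine le_iInf₂ fun P hP => ?_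
    obtain ⟨J, hJ, hJP⟩ := Ideal.exists_minimalPrimes_le hP
    have := hJ.isPrime
    calc I.height ≤ J.height := Ideal.height_mono hJ.le
      _ ≤ P.asIdeal.height := Ideal.height_mono hJP
      _ = Order.height P := P.height_eq_orderHeight

lemma moduleCodim_congr {R M N : Type*} [CommRing R] [AddCommGroup M] [Module R M]
    [AddCommGroup N] [Module R N] (e : M ≃ₗ[R] N) : moduleCodim R M = moduleCodim R N := by
  rw [moduleCodim, moduleCodim, e.annihilator_eq]

lemma moduleCodim_quotient {R : Type*} [CommRing R] (I : Ideal R) :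
    moduleCodim R (R ⧸ I) = I.height := by
  rw [moduleCodim, Ideal.annihilator_quotient, idealHeight_eq_height]

lemma moduleCodim_baseChange_quotient {A B : Type*} [CommRing A] [CommRing B] [Algebra A B]
    (I : Ideal A) : moduleCodim B (B ⊗[A] (A ⧸ I)) = (I.map (algebraMap A B)).height := by
  rw [← moduleCodim_quotient,
    moduleCodim_congr (Algebra.TensorProduct.quotIdealMapEquivTensorQuot B I).toLinearEquiv]

lemma Ideal.mem_minimalPrimes_inf_of_not_le {R : Type*} [CommRing R] {P J : Ideal R} [P.IsPrime]
    (hJ : ¬ J ≤ P) : P ∈ (P ⊓ J).minimalPrimes := by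
  refine ⟨⟨inferInstance, inf_le_left⟩, ?_⟩
  rintro Q ⟨hQ, hPJQ⟩ hQP
  rcases hQ.inf_le.mp hPJQ with hPQ | hJQ
  · exact hPQ
  · exact absurd (hJQ.trans hQP) hJ

lemma Ideal.map_mem_minimalPrimes_of_surjective {R S : Type*} [CommRing R] [CommRing S]
    {f : R →+* S} (hf : Function.Surjective f) {P : Ideal R}
    (hP : P ∈ (RingHom.ker f).minimalPrimes) : P.map f ∈ minimalPrimes S := by
  show P.map f ∈ (⊥ : Ideal S).minimalPrimes
  rw [← Ideal.map_bot (f := f), Ideal.minimalPrimes_map_of_surjective hf, bot_sup_eq]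
  exact ⟨P, hP, rfl⟩

lemma IsIntegral.of_mul_eq_zero {A R : Type*} [CommRing A] [CommRing R] [Algebra A R] {x z : R}
    {a : A} (ha : algebraMap A R a = x + z) (hxz : x * z = 0) : IsIntegral A x := by
  refine ⟨Polynomial.X * (Polynomial.X - Polynomial.C a),
    Polynomial.monic_X.mul (Polynomial.monic_X_sub_C a), ?_⟩
  simp only [Polynomial.eval₂_mul, Polynomial.eval₂_X, Polynomial.eval₂_sub,
    Polynomial.eval₂_C, ha]
  linear_combination -hxz

lemma MvPolynomial.isIntegral_apply_of_C_of_X {σ k A R : Type*} [CommSemiring k] [CommRing A]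
    [CommRing R] [Algebra A R] (q : MvPolynomial σ k →+* R) (hC : ∀ c, IsIntegral A (q (C c)))
    (hX : ∀ i, IsIntegral A (q (X i))) (g : MvPolynomial σ k) : IsIntegral A (q g) := by
  induction g using MvPolynomial.induction_on with
  | C c => exact hC c
  | add g h hg hh => rw [map_add]; exact hg.add hh
  | mul_X g i hg => rw [map_mul]; exact hg.mul (hX i)

lemma MvPolynomial.ker_aeval_ite_X {σ R : Type*} [CommRing R] (s : Set σ)
    [DecidablePred (· ∈ s)] :
    RingHom.ker (aeval (R := R) fun i => if i ∈ s then 0 else (X i : MvPolynomial σ R)) =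
      Ideal.span (X '' s) := by
  set g := aeval (R := R) fun i => if i ∈ s then 0 else (X i : MvPolynomial σ R)
  refine le_antisymm (fun f hf => ?_) (Ideal.span_le.mpr ?_)
  · have hsub : ∀ f, f - g f ∈ Ideal.span (X '' s) := by
      intro f
      induction f using MvPolynomial.induction_on with
      | C a => simp
      | add f h hf hh => simpa [add_sub_add_comm] using add_mem hf hh
      | mul_X f i hf =>
        by_cases hi : i ∈ s
        · simpa [g, hi] using
            Ideal.mul_mem_left _ f (Ideal.subset_span (Set.mem_image_of_mem X hi))
        · simpa [g, hi, sub_mul] using Ideal.mul_mem_right (X i) _ hf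
    simpa [RingHom.mem_ker.mp hf] using hsub f
  · rintro _ ⟨i, hi, rfl⟩
    simp [g, hi]

lemma MvPolynomial.isPrime_span_X_image {σ R : Type*} [CommRing R] [IsDomain R] (s : Set σ) :
    (Ideal.span (X '' s : Set (MvPolynomial σ R))).IsPrime := by
  classical
  rw [← ker_aeval_ite_X s]
  exact RingHom.ker_isPrime _

lemma MvPolynomial.height_span_ringEquiv_X_eq_one {σ k A : Type*} [Finite σ] [Field k]
    [CommRing A] (e : MvPolynomial σ k ≃+* A) (i : σ) : (Ideal.span {e (X i)}).height = 1 := by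
  have := isNoetherianRing_of_ringEquiv _ e
  have : IsDomain A := e.symm.injective.isDomain e.symm.toRingHom
  refine Ideal.height_span_singleton_eq_one_of_mem_nonZeroDivisors
    (mem_nonZeroDivisors_of_ne_zero ?_) ?_
  · simp [X_ne_zero]
  · rw [MulEquiv.isUnit_map e]
    exact X_prime.not_isUnit

namespace PlaneUnionLine

variable {k : Type*} [Field k]

lemma X_two_notMem_span_X_zero_X_one :
    (X 2 : MvPolynomial (Fin 3) k) ∉ Ideal.span {X 0, X 1} := by
  rw [← Set.image_pair, mem_ideal_span_X_image]
  simp [support_X]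

lemma eq_zero_of_eval₂Hom_mem_span_X_two {g : MvPolynomial (Fin 2) k}
    (h : eval₂Hom C ![X 0 + X 2, X 1] g ∈ Ideal.span {(X 2 : MvPolynomial (Fin 3) k)}) :
    g = 0 := by
  let ψ : MvPolynomial (Fin 3) k →+* MvPolynomial (Fin 2) k := eval₂Hom C ![X 0, X 1, 0]
  have hψ : ψ.comp (eval₂Hom C ![X 0 + X 2, X 1]) = RingHom.id _ :=
    ringHom_ext (by simp [ψ]) (fun i => by fin_cases i <;> simp [ψ])
  obtain ⟨c, hc⟩ := Ideal.mem_span_singleton'.mp h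
  calc g = ψ (c * X 2) := by rw [hc, ← RingHom.comp_apply, hψ, RingHom.id_apply]
    _ = 0 := by simp [ψ]

variable {R : Type*} [CommRing R] {q : MvPolynomial (Fin 3) k →+* R}

lemma height_span_y_eq_zero (hq : Function.Surjective q)
    (hker : RingHom.ker q = Ideal.span {X 0, X 1} ⊓ Ideal.span {X 2}) :
    (Ideal.span {q (X 1)}).height = 0 := by
  have : (Ideal.span {X 0, X 1} : Ideal (MvPolynomial (Fin 3) k)).IsPrime := by
    rw [← Set.image_pair]
    exact isPrime_span_X_image _
  have hP : Ideal.span {X 0, X 1} ∈ (RingHom.ker q).minimalPrimes := hker ▸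
    Ideal.mem_minimalPrimes_inf_of_not_le fun h => X_two_notMem_span_X_zero_X_one
      (h (Ideal.mem_span_singleton_self _))
  have hmin := Ideal.map_mem_minimalPrimes_of_surjective hq hP
  have := hmin.isPrime
  have hy : Ideal.span {q (X 1)} ≤ (Ideal.span {X 0, X 1}).map q :=
    Ideal.span_le.mpr (Set.singleton_subset_iff.mpr
      (Ideal.mem_map_of_mem q (Ideal.subset_span (by simp))))
  exact nonpos_iff_eq_zero.mp
    ((Ideal.height_mono hy).trans_eq (Ideal.height_eq_zero_iff.mpr hmin))

variable {A : Type*} [CommRing A] {p : MvPolynomial (Fin 2) k →+* A} {φ : A →+* R}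

lemma injective (hp : Function.Surjective p) (hker : RingHom.ker q ≤ Ideal.span {X 2})
    (hφ : φ.comp p = q.comp (eval₂Hom C ![X 0 + X 2, X 1])) : Function.Injective φ := by
  refine (injective_iff_map_eq_zero φ).mpr fun a ha => ?_
  obtain ⟨g, rfl⟩ := hp a
  have hg : eval₂Hom C ![X 0 + X 2, X 1] g ∈ RingHom.ker q := by
    rw [RingHom.mem_ker, ← RingHom.comp_apply, ← hφ, RingHom.comp_apply, ha]
  rw [eq_zero_of_eval₂Hom_mem_span_X_two (hker hg), map_zero]

lemma isIntegral (hq : Function.Surjective q) (hxz : q (X 0) * q (X 2) = 0)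
    (hφ : φ.comp p = q.comp (eval₂Hom C ![X 0 + X 2, X 1])) : φ.IsIntegral := by
  let : Algebra A R := φ.toAlgebra
  have hφp (g) : algebraMap A R (p g) = q (eval₂Hom C ![X 0 + X 2, X 1] g) :=
    RingHom.congr_fun hφ g
  have hu : algebraMap A R (p (X 0)) = q (X 0) + q (X 2) := by simp [hφp]
  intro r
  obtain ⟨g, rfl⟩ := hq r
  refine isIntegral_apply_of_C_of_X q (fun c => ?_) (fun i => ?_) g
  · simpa [hφp] using isIntegral_algebraMap (A := R) (x := p (C c))
  · fin_cases i
    · exact .of_mul_eq_zero hu hxz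
    · simpa [hφp] using isIntegral_algebraMap (A := R) (x := p (X 1))
    · exact .of_mul_eq_zero (hu.trans (add_comm _ _)) ((mul_comm _ _).trans hxz)

end PlaneUnionLine

theorem codim_drops_example (k : Type) [Field k] :
    ∀ (R : Type) (_ : CommRing R)
      (q : MvPolynomial (Fin 3) k →+* R) (_ : Function.Surjective q)
      (_ : RingHom.ker q =
        (Ideal.span {X 0, X 1} ⊓ Ideal.span {X 2} : Ideal (MvPolynomial (Fin 3) k))),
    ∀ (A : Type) (_ : CommRing A)
      (p : MvPolynomial (Fin 2) k →+* A) (_ : Function.Surjective p)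
      (_ : RingHom.ker p = ⊥),
    -- the map `A → R`, `u ↦ x+z`, `v ↦ y`
    ∀ (φ : A →+* R)
      (_ : φ.comp p = q.comp (eval₂Hom MvPolynomial.C ![X 0 + X 2, X 1])),
    -- `φ` is injective and integral
    Function.Injective φ ∧ φ.IsIntegral ∧
    -- and for `M = A ⧸ (v)` the codimensions are `1` and `0` respectively
    ∀ (M : Type) (_ : AddCommGroup M) (_ : Module A M)
      (e : M ≃ₗ[A] (A ⧸ Ideal.span {p (X 1)})),
      moduleCodim A M = 1 ∧
      (letI : Algebra A R := φ.toAlgebra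
       moduleCodim R (R ⊗[A] M) = 0) := by
  intro R _ q hq hker A _ p hp hkerp φ hφ
  have hxz : q (X 0) * q (X 2) = 0 := by
    rw [← map_mul, ← RingHom.mem_ker, hker]
    exact ⟨Ideal.mul_mem_right _ _ (Ideal.subset_span (by simp)),
      Ideal.mul_mem_left _ _ (Ideal.mem_span_singleton_self _)⟩
  refine ⟨PlaneUnionLine.injective hp (hker.trans_le inf_le_right) hφ,
    PlaneUnionLine.isIntegral hq hxz hφ, fun M _ _ e => ⟨?_, ?_⟩⟩
  · rw [moduleCodim_congr e, moduleCodim_quotient]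
    exact height_span_ringEquiv_X_eq_one (RingEquiv.ofBijective p
      ⟨(RingHom.injective_iff_ker_eq_bot p).mpr hkerp, hp⟩) 1
  · let : Algebra A R := φ.toAlgebra
    rw [moduleCodim_congr (e.baseChange A R _ _), moduleCodim_baseChange_quotient,
      Ideal.map_span, Set.image_singleton]
    have hy : φ (p (X 1)) = q (X 1) := by simpa using RingHom.congr_fun hφ (X 1)
    rw [RingHom.algebraMap_toAlgebra, hy]
    exact PlaneUnionLine.height_span_y_eq_zero hq hker
end

section
/- Fix a nonnegative integer d and a codimension sequence c. For any finite subset Y of Z × Z, the intersection of the Boij–Söderberg cone B^c_d with the coordinate subspace V_Y of V = ⊕_{i,j∈Z} Q is the cone spanned by the finitely many pure tables β(t) supported in Y; consequently B^c_d is closed in the finite topology on V. -/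
/-!
STATEMENT 18: Fix `d ≥ 0` and a codimension sequence `c`.  For any finite subset
`Y ⊆ ℤ × ℤ`, the intersection of the Boij–Söderberg cone `B^c_d` with the
coordinate subspace `V_Y` of `V = ⊕_{(i,j) ∈ ℤ×ℤ} ℚ` is the cone spanned by the
finitely many pure (Herzog–Kühl) tables `β(t)` supported in `Y`; consequently
`B^c_d` is closed in the finite topology on `V` (formalized through its use:
a pointwise-convergent sequence in `B^c_d ∩ V_Y` has its limit in `B^c_d`).
-/

open Filter Topology Classical

/-- A degree sequence for `d`: an increasing sequence `t_a < ⋯ < t_{a+l}` of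
integers with `0 ≤ l ≤ d` (only the values of `t` on `[a, a+l]` are relevant). -/
structure DegSeq (d : ℕ) where
  a : ℤ
  l : ℕ
  hl : l ≤ d
  t : ℤ → ℤ
  mono : ∀ i j : ℤ, a ≤ i → i < j → j ≤ a + l → t i < t j

/-- The pure Betti table `β(t)` of Herzog–Kühl type attached to a degree
sequence: `β(t)_{i, t_i} = ∏_{n ≠ a} |t_n - t_a| / ∏_{n ≠ i} |t_n - t_i|`
for `a ≤ i ≤ a + l`, and `0` elsewhere. -/
noncomputable def pureTable {d : ℕ} (D : DegSeq d) : (ℤ × ℤ) → ℚ := fun p =>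
  if D.a ≤ p.1 ∧ p.1 ≤ D.a + D.l ∧ p.2 = D.t p.1 then
    (∏ n ∈ (Finset.Icc D.a (D.a + D.l)).erase D.a, |((D.t n - D.t D.a : ℤ) : ℚ)|) /
    (∏ n ∈ (Finset.Icc D.a (D.a + D.l)).erase p.1, |((D.t n - D.t p.1 : ℤ) : ℚ)|)
  else 0

/-- A codimension sequence for `d`: a nondecreasing function with values in
`{∅ = ⊥, 0, 1, …, d, ∞ = ⊤}`. -/
structure CodimSeq (d : ℕ) where
  c : ℤ → WithBot ℕ∞
  mono : Monotone c
  le : ∀ i : ℤ, c i ≤ (d : ℕ∞) ∨ c i = ((⊤ : ℕ∞) : WithBot ℕ∞)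

/-- Compatibility of a degree sequence with a codimension sequence:
`0 ≤ c_a ≤ codim(t) ≤ c_{a+1}`. -/
def Compatible {d : ℕ} (c : CodimSeq d) (D : DegSeq d) : Prop :=
  c.c D.a ≠ ⊥ ∧ c.c D.a ≤ ((D.l : ℕ∞) : WithBot ℕ∞) ∧
    ((D.l : ℕ∞) : WithBot ℕ∞) ≤ c.c (D.a + 1)

/-- Membership in the cone (nonnegative rational span) of a set of vectors. -/
def InCone (S : Set ((ℤ × ℤ) → ℚ)) (v : (ℤ × ℤ) → ℚ) : Prop :=
  ∃ (m : ℕ) (r : Fin m → ℚ) (w : Fin m → (ℤ × ℤ) → ℚ),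
    (∀ i, 0 ≤ r i ∧ w i ∈ S) ∧ v = ∑ i, r i • w i

/-- The Boij–Söderberg cone `B^c_d`. -/
def BSCone (d : ℕ) (c : CodimSeq d) : Set ((ℤ × ℤ) → ℚ) :=
  {v | InCone {w | ∃ D : DegSeq d, Compatible c D ∧ w = pureTable D} v}

abbrev VV := (ℤ × ℤ) → ℚ

lemma pure_nonneg {d} (D : DegSeq d) (p : ℤ × ℤ) : 0 ≤ pureTable D p := by
  unfold pureTable
  split
  · exact div_nonneg (Finset.prod_nonneg fun n _ => abs_nonneg _)
      (Finset.prod_nonneg fun n _ => abs_nonneg _)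
  · exact le_refl _

lemma den_pos {d} (D : DegSeq d) {i : ℤ} (h1 : D.a ≤ i) (h2 : i ≤ D.a + D.l) :
    0 < ∏ n ∈ (Finset.Icc D.a (D.a + D.l)).erase i, |((D.t n - D.t i : ℤ) : ℚ)| := by
  apply Finset.prod_pos
  intro n hn
  obtain ⟨hne, hmem⟩ := Finset.mem_erase.mp hn
  rw [Finset.mem_Icc] at hmem
  have hne' : D.t n ≠ D.t i := by
    rcases lt_or_gt_of_ne hne with h | h
    · exact ne_of_lt (D.mono n i hmem.1 h h2)
    · exact ne_of_gt (D.mono i n h1 h hmem.2)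
  rw [abs_pos]
  exact_mod_cast sub_ne_zero.mpr hne'

lemma a_le_add {d} (D : DegSeq d) : D.a ≤ D.a + D.l :=
  le_add_of_nonneg_right (by positivity)

lemma pure_pos {d} (D : DegSeq d) {n : ℤ} (h1 : D.a ≤ n) (h2 : n ≤ D.a + D.l) :
    0 < pureTable D (n, D.t n) := by
  unfold pureTable
  rw [if_pos ⟨h1, h2, rfl⟩]
  exact div_pos (den_pos D le_rfl (a_le_add D)) (den_pos D h1 h2)

lemma pure_support {d} (D : DegSeq d) {p : ℤ × ℤ} (h : pureTable D p ≠ 0) :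
    D.a ≤ p.1 ∧ p.1 ≤ D.a + D.l ∧ p.2 = D.t p.1 := by
  by_contra hc
  exact h (by unfold pureTable; rw [if_neg hc])

noncomputable def ptFun (a : ℤ) (l : ℕ) (t : ℤ → ℤ) : (ℤ × ℤ) → ℚ := fun p =>
  if a ≤ p.1 ∧ p.1 ≤ a + l ∧ p.2 = t p.1 then
    (∏ n ∈ (Finset.Icc a (a + l)).erase a, |((t n - t a : ℤ) : ℚ)|) /
    (∏ n ∈ (Finset.Icc a (a + l)).erase p.1, |((t n - t p.1 : ℤ) : ℚ)|)
  else 0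

lemma pureTable_eq_ptFun {d} (D : DegSeq d) : pureTable D = ptFun D.a D.l D.t := rfl

lemma ptFun_congr (a : ℤ) (l : ℕ) {t t' : ℤ → ℤ}
    (h : ∀ n, a ≤ n → n ≤ a + (l : ℤ) → t n = t' n) : ptFun a l t = ptFun a l t' := by
  funext p
  unfold ptFun
  have hIcc : ∀ n ∈ Finset.Icc a (a + (l:ℤ)), t n = t' n := by
    intro n hn; rw [Finset.mem_Icc] at hn; exact h n hn.1 hn.2
  have hcond : (a ≤ p.1 ∧ p.1 ≤ a + l ∧ p.2 = t p.1) ↔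
      (a ≤ p.1 ∧ p.1 ≤ a + l ∧ p.2 = t' p.1) := by
    constructor
    · rintro ⟨h1, h2, h3⟩; exact ⟨h1, h2, h3.trans (h _ h1 h2)⟩
    · rintro ⟨h1, h2, h3⟩; exact ⟨h1, h2, h3.trans (h _ h1 h2).symm⟩
  by_cases hc : a ≤ p.1 ∧ p.1 ≤ a + (l:ℤ) ∧ p.2 = t p.1
  · rw [if_pos hc, if_pos (hcond.mp hc)]
    have hta : t a = t' a := h a le_rfl (le_add_of_nonneg_right (by positivity))
    have htp : t p.1 = t' p.1 := h p.1 hc.1 hc.2.1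
    congr 1
    · exact Finset.prod_congr rfl fun n hn => by
        rw [hIcc n (Finset.mem_of_mem_erase hn), hta]
    · exact Finset.prod_congr rfl fun n hn => by
        rw [hIcc n (Finset.mem_of_mem_erase hn), htp]
  · rw [if_neg hc, if_neg (fun h' => hc (hcond.mpr h'))]

lemma inCone_of_sum {ι : Type} (s : Finset ι) (G : Set VV) (r : ι → ℚ) (w : ι → VV)
    (h : ∀ i ∈ s, 0 ≤ r i ∧ w i ∈ G) : InCone G (∑ i ∈ s, r i • w i) := by
  classical
  refine ⟨s.card, fun j => r (s.equivFin.symm j : ι), fun j => w (s.equivFin.symm j : ι),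
    fun j => h _ (s.equivFin.symm j).2, ?_⟩
  rw [← Finset.sum_coe_sort s (fun i => r i • w i),
    ← Equiv.sum_comp s.equivFin.symm (fun i : {x // x ∈ s} => r (i : ι) • w (i : ι))]

lemma inCone_finset {G : Set VV} (hG : G.Finite) {v : VV} (h : InCone G v) :
    ∃ r : VV → ℚ, (∀ w, 0 ≤ r w) ∧ v = ∑ w ∈ hG.toFinset, r w • w := by
  classical
  obtain ⟨m, r, w, hrw, hv⟩ := h
  refine ⟨fun u => ∑ i ∈ Finset.univ.filter (fun i => w i = u), r i,
    fun u => Finset.sum_nonneg fun i _ => (hrw i).1, ?_⟩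
  rw [hv, ← Finset.sum_fiberwise_of_maps_to (g := w) (t := hG.toFinset)
    (fun i _ => hG.mem_toFinset.mpr (hrw i).2) (fun i => r i • w i)]
  refine Finset.sum_congr rfl fun u _ => ?_
  rw [Finset.sum_smul]
  refine Finset.sum_congr rfl fun i hi => ?_
  rw [(Finset.mem_filter.mp hi).2]

lemma caratheodory_cone (v : VV) (T : Finset VV)
    (hT : ∃ r : VV → ℚ, (∀ w ∈ T, 0 ≤ r w) ∧ v = ∑ w ∈ T, r w • w) :
    ∃ T' : Finset VV, T' ⊆ T ∧ LinearIndependent ℚ (Subtype.val : ↥(T' : Set VV) → VV) ∧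
      ∃ r : VV → ℚ, (∀ w ∈ T', 0 ≤ r w) ∧ v = ∑ w ∈ T', r w • w := by
  classical
  induction T using Finset.strongInductionOn with
  | _ T ih =>
  obtain ⟨r, hr, hv⟩ := hT
  by_cases hli : LinearIndependent ℚ (Subtype.val : ↥(T : Set VV) → VV)
  · exact ⟨T, subset_rfl, hli, r, hr, hv⟩
  · -- get a dependence relation
    have hli' : ¬ LinearIndependent ℚ (fun i : {x // x ∈ T} => (i : VV)) := hli
    obtain ⟨g, hgsum, i0, hgi0⟩ := Fintype.not_linearIndependent_iff.mp hli'
    set c0 : VV → ℚ := fun u => if h : u ∈ T then g ⟨u, h⟩ else 0 with hc0def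
    have hc0sum : ∑ u ∈ T, c0 u • u = 0 := by
      rw [← Finset.sum_attach T (fun u => c0 u • u)]
      rw [← hgsum, Finset.univ_eq_attach]
      refine Finset.sum_congr rfl fun i _ => ?_
      simp [hc0def]
    have hkey : ∃ c : VV → ℚ, (∑ u ∈ T, c u • u = 0) ∧ ∃ u ∈ T, 0 < c u := by
      by_cases hpos : ∃ u ∈ T, 0 < c0 u
      · exact ⟨c0, hc0sum, hpos⟩
      · push_neg at hpos
        refine ⟨fun u => -c0 u, ?_, (i0 : VV), i0.2, ?_⟩
        · simp only [neg_smul, Finset.sum_neg_distrib, hc0sum, neg_zero]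
        · have h1 : c0 (i0 : VV) ≠ 0 := by simp [hc0def, i0.2]; simpa using hgi0
          have h2 := hpos (i0 : VV) i0.2
          simp only [neg_pos]
          exact lt_of_le_of_ne h2 h1
    obtain ⟨c, hcsum, w1, hw1T, hw1pos⟩ := hkey
    set S := T.filter (fun u => 0 < c u) with hSdef
    have hS : S.Nonempty := ⟨w1, Finset.mem_filter.mpr ⟨hw1T, hw1pos⟩⟩
    obtain ⟨w0, hw0S, hmin⟩ := S.exists_min_image (fun u => r u / c u) hS
    have hw0T : w0 ∈ T := (Finset.mem_filter.mp hw0S).1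
    have hcw0 : 0 < c w0 := (Finset.mem_filter.mp hw0S).2
    set L := r w0 / c w0 with hLdef
    have hL : 0 ≤ L := div_nonneg (hr _ hw0T) hcw0.le
    set r'' : VV → ℚ := fun u => r u - L * c u with hr''def
    have hr'' : ∀ u ∈ T, 0 ≤ r'' u := by
      intro u huT
      by_cases hcu : 0 < c u
      · have := hmin u (Finset.mem_filter.mpr ⟨huT, hcu⟩)
        have : L * c u ≤ r u := (le_div_iff₀ hcu).mp this
        simpa [hr''def] using this
      · push_neg at hcu
        have h1 : L * c u ≤ 0 := mul_nonpos_of_nonneg_of_nonpos hL hcu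
        have h2 := hr u huT
        simp only [hr''def, sub_nonneg]
        linarith
    have hsum'' : ∑ u ∈ T, r'' u • u = v := by
      simp only [hr''def, sub_smul, Finset.sum_sub_distrib, mul_smul]
      rw [← Finset.smul_sum, hcsum, smul_zero, sub_zero, hv]
    have hr''0 : r'' w0 = 0 := by
      simp only [hr''def, hLdef]
      rw [div_mul_cancel₀ _ (ne_of_gt hcw0), sub_self]
    have herase : ∑ u ∈ T.erase w0, r'' u • u = v := by
      rw [Finset.sum_erase _ (by rw [hr''0, zero_smul]), hsum'']
    obtain ⟨T', hT'sub, hT'ind, hres⟩ := ih (T.erase w0) (Finset.erase_ssubset hw0T)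
      ⟨r'', fun u hu => hr'' u (Finset.mem_of_mem_erase hu), herase.symm⟩
    exact ⟨T', hT'sub.trans (Finset.erase_subset _ _), hT'ind, hres⟩

noncomputable def indic (p : ℤ × ℤ) : VV := fun q => if q = p then 1 else 0

lemma supp_expand (Y : Finset (ℤ × ℤ)) (v : VV) (hv : ∀ p ∉ Y, v p = 0) :
    v = ∑ p ∈ Y, v p • indic p := by
  classical
  funext q
  simp only [Finset.sum_apply, Pi.smul_apply, indic, smul_eq_mul, mul_ite, mul_one, mul_zero]
  rw [Finset.sum_ite_eq Y q (fun p => v p)]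
  by_cases hq : q ∈ Y
  · rw [if_pos hq]
  · rw [if_neg hq, hv q hq]

lemma phi_tendsto (Y : Finset (ℤ × ℤ)) (φ : VV →ₗ[ℚ] ℚ) (γ : ℕ → VV) (B : VV)
    (hγ : ∀ k, ∀ p ∉ Y, γ k p = 0) (hB : ∀ p ∉ Y, B p = 0)
    (hlim : ∀ p, Filter.Tendsto (fun k => γ k p) Filter.atTop (nhds (B p))) :
    Filter.Tendsto (fun k => φ (γ k)) Filter.atTop (nhds (φ B)) := by
  have expand : ∀ v : VV, (∀ p ∉ Y, v p = 0) → φ v = ∑ p ∈ Y, v p * φ (indic p) := by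
    intro v hv
    conv_lhs => rw [supp_expand Y v hv]
    rw [map_sum]
    exact Finset.sum_congr rfl fun p _ => by rw [map_smul, smul_eq_mul]
  have hfe : (fun k => φ (γ k)) = fun k => ∑ p ∈ Y, γ k p * φ (indic p) :=
    funext fun k => expand _ (hγ k)
  rw [hfe, expand B hB]
  exact tendsto_finset_sum _ fun p _ => (hlim p).mul_const _

lemma cone_limit {G : Set VV} (hG : G.Finite) (Y : Finset (ℤ × ℤ)) (β : ℕ → VV) (B : VV)
    (hsupp : ∀ n, ∀ p ∉ Y, β n p = 0) (hBsupp : ∀ p ∉ Y, B p = 0)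
    (hmem : ∀ n, InCone G (β n))
    (hlim : ∀ p, Filter.Tendsto (fun n => β n p) Filter.atTop (nhds (B p))) :
    InCone G B := by
  classical
  set GF := hG.toFinset with hGFdef
  have hdata : ∀ n, ∃ T' : Finset VV, T' ⊆ GF ∧
      LinearIndependent ℚ (Subtype.val : ↥(T' : Set VV) → VV) ∧
      ∃ r : VV → ℚ, (∀ w ∈ T', 0 ≤ r w) ∧ β n = ∑ w ∈ T', r w • w := by
    intro n
    obtain ⟨r, hr, hv⟩ := inCone_finset hG (hmem n)
    exact caratheodory_cone _ GF ⟨r, fun w _ => hr w, hv⟩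
  choose Tn hTsub hTind rn hrn hβn using hdata
  have hinf : ∃ T' : Finset VV, {n | Tn n = T'}.Infinite := by
    by_contra hfin
    push_neg at hfin
    have hfin2 : (Set.univ : Set ℕ).Finite := by
      have hcover : (Set.univ : Set ℕ) ⊆ ⋃ T' ∈ GF.powerset, {n | Tn n = T'} := by
        intro n _
        exact Set.mem_biUnion (Finset.mem_powerset.mpr (hTsub n)) rfl
      exact (Set.Finite.biUnion (GF.powerset.finite_toSet) (fun T' _ => hfin T')).subset hcover
    exact Set.infinite_univ hfin2
  obtain ⟨T', hT'inf⟩ := hinf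
  obtain ⟨n0, hn0⟩ := hT'inf.nonempty
  have hn0' : Tn n0 = T' := hn0
  have hT'sub : T' ⊆ GF := by rw [← hn0']; exact hTsub n0
  have hind' : LinearIndependent ℚ (Subtype.val : ↥(T' : Set VV) → VV) := by
    rw [← hn0']; exact hTind n0
  have hpinf : {n | Tn n = T'}.Infinite := hT'inf
  set nth : ℕ → ℕ := Nat.nth (fun n => Tn n = T') with hnthdef
  have hmono : StrictMono nth := Nat.nth_strictMono hpinf
  have hnthmem : ∀ k, Tn (nth k) = T' := fun k => Nat.nth_mem_of_infinite hpinf k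
  set γ : ℕ → VV := fun k => β (nth k) with hγdef
  have hγrep : ∀ k, γ k = ∑ w ∈ T', rn (nth k) w • w := by
    intro k
    have := hβn (nth k)
    rw [hnthmem k] at this
    exact this
  have hγlim : ∀ pt, Filter.Tendsto (fun k => γ k pt) Filter.atTop (nhds (B pt)) :=
    fun pt => (hlim pt).comp hmono.tendsto_atTop
  have hγsupp : ∀ k, ∀ q, q ∉ Y → γ k q = 0 := fun k => hsupp (nth k)
  -- basis extension and coordinate functionals
  let b := Module.Basis.extend hind'
  have hsub := Module.Basis.subset_extend hind'
  let idx : ∀ w, w ∈ T' → ↥(LinearIndepOn.extend (show LinearIndepOn ℚ id (T' : Set VV) from hind') (Set.subset_univ _)) :=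
    fun w hw => ⟨w, hsub (Finset.mem_coe.mpr hw)⟩
  let φ : ∀ w, w ∈ T' → (VV →ₗ[ℚ] ℚ) := fun w hw => b.coord (idx w hw)
  have hφval : ∀ w (hw : w ∈ T'), ∀ w' ∈ T', φ w hw w' = if w' = w then 1 else 0 := by
    intro w hw w' hw'
    have heq : w' = b (idx w' hw') := by
      have h := Module.Basis.extend_apply_self hind' (idx w' hw')
      exact h.symm
    show b.coord (idx w hw) w' = _
    rw [Module.Basis.coord_apply]
    conv_lhs => rw [heq]
    rw [Module.Basis.repr_self, Finsupp.single_apply]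
    have hiff : (idx w' hw' = idx w hw) ↔ w' = w := by
      constructor
      · intro h; exact congrArg Subtype.val h
      · intro h; subst h; rfl
    by_cases h : w' = w
    · rw [if_pos (hiff.mpr h), if_pos h]
    · rw [if_neg (fun hh => h (hiff.mp hh)), if_neg h]
  have hφγ : ∀ w (hw : w ∈ T') (k : ℕ), φ w hw (γ k) = rn (nth k) w := by
    intro w hw k
    rw [hγrep k, map_sum]
    have hcong : ∀ w' ∈ T', φ w hw (rn (nth k) w' • w') =
        if w' = w then rn (nth k) w' else 0 := by
      intro w' hw'
      rw [map_smul, smul_eq_mul, hφval w hw w' hw']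
      by_cases h : w' = w <;> simp [h]
    rw [Finset.sum_congr rfl hcong, Finset.sum_ite_eq' T' w, if_pos hw]
  have hφlim : ∀ w (hw : w ∈ T'),
      Filter.Tendsto (fun k => rn (nth k) w) Filter.atTop (nhds (φ w hw B)) := by
    intro w hw
    have h := phi_tendsto Y (φ w hw) γ B hγsupp hBsupp hγlim
    simpa only [hφγ w hw] using h
  set R : VV → ℚ := fun w => if hw : w ∈ T' then φ w hw B else 0 with hRdef
  have hRval : ∀ w (hw : w ∈ T'), R w = φ w hw B := by
    intro w hw
    simp only [hRdef, dif_pos hw]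
  have hRnn : ∀ w ∈ T', 0 ≤ R w := by
    intro w hw
    rw [hRval w hw]
    exact ge_of_tendsto' (hφlim w hw) (fun k => hrn (nth k) w (by rw [hnthmem k]; exact hw))
  have hBrep : B = ∑ w ∈ T', R w • w := by
    funext pt
    have h1 : Filter.Tendsto (fun k => γ k pt) Filter.atTop (nhds (B pt)) := hγlim pt
    have h2 : Filter.Tendsto (fun k => γ k pt) Filter.atTop
        (nhds ((∑ w ∈ T', R w • w) pt)) := by
      have heq : ∀ k, γ k pt = ∑ w ∈ T', rn (nth k) w * w pt := by
        intro k
        rw [hγrep k]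
        simp [Finset.sum_apply]
      simp only [heq, Finset.sum_apply, Pi.smul_apply, smul_eq_mul]
      exact tendsto_finset_sum _ fun w hw => by
        have h3 := (hφlim w hw).mul_const (w pt)
        rw [← hRval w hw] at h3
        exact h3
    exact tendsto_nhds_unique h1 h2
  rw [hBrep]
  exact inCone_of_sum T' G R id
    (fun w hw => ⟨hRnn w hw, hG.mem_toFinset.mp (hT'sub hw)⟩)


lemma funset_finite (I Bv : Finset ℤ) :
    {t : ℤ → ℤ | (∀ n ∉ I, t n = 0) ∧ ∀ n, t n ∈ Bv ∨ t n = 0}.Finite := by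
  classical
  have himg : Set.Finite ((fun g : ↥I → ℤ => fun n => if h : n ∈ I then g ⟨n, h⟩ else 0) ''
      (Set.univ.pi (fun _ : ↥I => (↑Bv ∪ {0} : Set ℤ)))) :=
    (Set.Finite.pi (fun _ => (Bv.finite_toSet.union (Set.finite_singleton 0)))).image _
  refine himg.subset ?_
  rintro t ⟨h1, h2⟩
  refine ⟨fun i => t i, ?_, ?_⟩
  · intro i _
    rcases h2 i with h | h
    · exact Or.inl h
    · exact Or.inr h
  · funext n
    by_cases h : n ∈ I
    · simp [h]
    · simp [h, h1 n h]

lemma restricted_finite (d : ℕ) (c : CodimSeq d) (Y : Finset (ℤ × ℤ)) :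
    ({w | ∃ D : DegSeq d, Compatible c D ∧ w = pureTable D ∧
        ∀ n : ℤ, D.a ≤ n → n ≤ D.a + D.l → (n, D.t n) ∈ Y} : Set VV).Finite := by
  classical
  rcases Y.eq_empty_or_nonempty with rfl | hY
  · refine Set.Finite.subset Set.finite_empty ?_
    rintro w ⟨D, _, _, hall⟩
    exact absurd (hall D.a le_rfl (a_le_add D)) (by simp)
  · have hA : (Y.image Prod.fst).Nonempty := hY.image _
    set A := Y.image Prod.fst with hAdef
    set a0 := A.min' hA with ha0
    set a1 := A.max' hA with ha1
    set I := Finset.Icc a0 (a1 + d) with hIdef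
    set Bv := Y.image Prod.snd with hBvdef
    have hF : {t : ℤ → ℤ | (∀ n ∉ I, t n = 0) ∧ ∀ n, t n ∈ Bv ∨ t n = 0}.Finite :=
      funset_finite I Bv
    have hbig : Set.Finite ((fun x : ℤ × ℕ × (ℤ → ℤ) => ptFun x.1 x.2.1 x.2.2) ''
        ((↑A : Set ℤ) ×ˢ ((Set.Iic d) ×ˢ
          {t : ℤ → ℤ | (∀ n ∉ I, t n = 0) ∧ ∀ n, t n ∈ Bv ∨ t n = 0}))) :=
      ((A.finite_toSet.prod ((Set.finite_Iic d).prod hF))).image _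
    refine hbig.subset ?_
    rintro w ⟨D, _, rfl, hall⟩
    set t' : ℤ → ℤ := fun n => if D.a ≤ n ∧ n ≤ D.a + D.l then D.t n else 0 with ht'
    have haA : D.a ∈ A := Finset.mem_image.mpr
      ⟨(D.a, D.t D.a), hall D.a le_rfl (a_le_add D), rfl⟩
    refine ⟨(D.a, D.l, t'), ⟨haA, Set.mem_Iic.mpr D.hl, ?_, ?_⟩, ?_⟩
    · intro n hnI
      rw [ht']
      simp only
      rw [if_neg]
      intro hc
      apply hnI
      rw [hIdef, Finset.mem_Icc]
      constructor
      · exact (A.min'_le D.a haA).trans hc.1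
      · exact hc.2.trans (add_le_add (A.le_max' D.a haA) (by exact_mod_cast D.hl))
    · intro n
      by_cases hc : D.a ≤ n ∧ n ≤ D.a + D.l
      · left
        rw [ht']; simp only; rw [if_pos hc]
        exact Finset.mem_image.mpr ⟨(n, D.t n), hall n hc.1 hc.2, rfl⟩
      · right
        rw [ht']; simp only; rw [if_neg hc]
    · rw [pureTable_eq_ptFun]
      exact (ptFun_congr D.a D.l (fun n h1 h2 => by
        rw [ht']; simp only; rw [if_pos ⟨h1, h2⟩])).symm

lemma part1_iff (d : ℕ) (c : CodimSeq d) (Y : Finset (ℤ × ℤ)) (v : VV) :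
    (v ∈ BSCone d c ∧ ∀ p : ℤ × ℤ, p ∉ Y → v p = 0) ↔
    InCone {w | ∃ D : DegSeq d, Compatible c D ∧ w = pureTable D ∧
      ∀ n : ℤ, D.a ≤ n → n ≤ D.a + D.l → (n, D.t n) ∈ Y} v := by
  classical
  constructor
  · rintro ⟨⟨m, r, w, hrw, hv⟩, hsupp⟩
    have hws : ∀ i, r i ≠ 0 → w i ∈ {w | ∃ D : DegSeq d, Compatible c D ∧ w = pureTable D ∧
        ∀ n : ℤ, D.a ≤ n → n ≤ D.a + D.l → (n, D.t n) ∈ Y} := by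
      intro i hi
      obtain ⟨D, hD, hwi⟩ := (hrw i).2
      refine ⟨D, hD, hwi, ?_⟩
      intro n hn1 hn2
      by_contra hnY
      have h0 : v (n, D.t n) = 0 := hsupp _ hnY
      have hpos : 0 < v (n, D.t n) := by
        rw [hv]
        simp only [Finset.sum_apply, Pi.smul_apply, smul_eq_mul]
        refine Finset.sum_pos' (fun j _ => mul_nonneg (hrw j).1 ?_)
          ⟨i, Finset.mem_univ i, ?_⟩
        · obtain ⟨D', _, hD'⟩ := (hrw j).2
          rw [hD']
          exact pure_nonneg D' _
        · rw [hwi]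
          exact mul_pos (lt_of_le_of_ne (hrw i).1 (Ne.symm hi)) (pure_pos D hn1 hn2)
      exact absurd h0 (ne_of_gt hpos)
    have hv' : v = ∑ i ∈ Finset.univ.filter (fun i => r i ≠ 0), r i • w i := by
      rw [hv]
      symm
      apply Finset.sum_filter_of_ne
      intro i _ hne h0
      exact hne (by rw [h0, zero_smul])
    rw [hv']
    exact inCone_of_sum _ _ r w (fun i hi => ⟨(hrw i).1, hws i (Finset.mem_filter.mp hi).2⟩)
  · rintro ⟨m, r, w, hrw, hv⟩
    constructor
    · exact ⟨m, r, w, fun i => ⟨(hrw i).1,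
        let ⟨D, h1, h2, _⟩ := (hrw i).2; ⟨D, h1, h2⟩⟩, hv⟩
    · intro p hp
      rw [hv]
      simp only [Finset.sum_apply, Pi.smul_apply, smul_eq_mul]
      refine Finset.sum_eq_zero fun i _ => ?_
      obtain ⟨D, _, hwi, hgr⟩ := (hrw i).2
      have hwz : w i p = 0 := by
        by_contra h
        rw [hwi] at h
        obtain ⟨h1, h2, h3⟩ := pure_support D h
        have hm : (p.1, D.t p.1) ∈ Y := hgr p.1 h1 h2
        have hpp : p = (p.1, D.t p.1) := Prod.ext rfl h3
        exact hp (by rw [hpp]; exact hm)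
      rw [hwz, mul_zero]

theorem bs_cone_locally_finitely_generated_and_closed (d : ℕ) (c : CodimSeq d)
    (Y : Finset (ℤ × ℤ)) :
    -- `B^c_d ∩ V_Y` is the cone spanned by the pure tables `β(t)` with
    -- `(n, t_n) ∈ Y` for all `a ≤ n ≤ a + l` ...
    (∀ v : (ℤ × ℤ) → ℚ,
      (v ∈ BSCone d c ∧ ∀ p : ℤ × ℤ, p ∉ Y → v p = 0) ↔
      InCone {w | ∃ D : DegSeq d, Compatible c D ∧ w = pureTable D ∧
        ∀ n : ℤ, D.a ≤ n → n ≤ D.a + D.l → (n, D.t n) ∈ Y} v) ∧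
    -- ... which is a finite collection of vectors ...
    ({w | ∃ D : DegSeq d, Compatible c D ∧ w = pureTable D ∧
        ∀ n : ℤ, D.a ≤ n → n ≤ D.a + D.l → (n, D.t n) ∈ Y} : Set ((ℤ × ℤ) → ℚ)).Finite ∧
    -- ... hence `B^c_d` is sequentially closed in the finite topology: any
    -- pointwise-convergent sequence of elements of `B^c_d` supported in the
    -- common finite set `Y` has its (pointwise) limit in `B^c_d`.
    (∀ (β : ℕ → (ℤ × ℤ) → ℚ) (B : (ℤ × ℤ) → ℚ),
      (∀ n, β n ∈ BSCone d c) →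
      (∀ n (p : ℤ × ℤ), p ∉ Y → β n p = 0) →
      (∀ p : ℤ × ℤ, Tendsto (fun n => β n p) atTop (nhds (B p))) →
      B ∈ BSCone d c) := by
  refine ⟨fun v => part1_iff d c Y v, restricted_finite d c Y, ?_⟩
  intro β B hβ hs hlim
  have hBsupp : ∀ p ∉ Y, B p = 0 := by
    intro p hp
    have h2 : Filter.Tendsto (fun n => β n p) Filter.atTop (nhds 0) := by
      have he : (fun n => β n p) = fun _ => 0 := funext fun n => hs n p hp
      rw [he]
      exact tendsto_const_nhds
    exact tendsto_nhds_unique (hlim p) h2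
  have hmem : ∀ n, InCone {w | ∃ D : DegSeq d, Compatible c D ∧ w = pureTable D ∧
      ∀ n : ℤ, D.a ≤ n → n ≤ D.a + D.l → (n, D.t n) ∈ Y} (β n) :=
    fun n => (part1_iff d c Y (β n)).mp ⟨hβ n, hs n⟩
  have hB := cone_limit (restricted_finite d c Y) Y β B hs hBsupp hmem hlim
  exact ((part1_iff d c Y B).mpr hB).1
end
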